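/- Let E be a complex Banach lattice and let (S_n) be a (not necessarily norm bounded) sequence of positive bounded linear operators on E. Then the set I := { x ∈ E : there exists a sequence (x_n) in E with x_n → x and S_n |x_n| → 0 } is a closed ideal in E. -/

import Mathlib

open Filter Topology Asymptotics

noncomputable section

/-- A complex Banach lattice, axiomatized via its order (given by the positive cone),
its modulus map `cabs` and its canonical conjugation `conj`. -/
class ComplexBanachLattice (E : Type*) extends
    NormedAddCommGroup E, NormedSpace ℂ E, CompleteSpace E, PartialOrder E where
  /-- the modulus map `z ↦ |z|` -/
  cabs : E → E
  /-- the canonical conjugation of the complex Banach lattice -/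
  conj : E → E
  add_le_add_left' : ∀ a b : E, a ≤ b → ∀ c : E, c + a ≤ c + b
  smul_nonneg' : ∀ (r : ℝ) (x : E), 0 ≤ r → 0 ≤ x → 0 ≤ (r : ℂ) • x
  isClosed_nonneg : IsClosed {x : E | 0 ≤ x}
  cabs_nonneg : ∀ x : E, 0 ≤ cabs x
  cabs_of_nonneg : ∀ x : E, 0 ≤ x → cabs x = x
  cabs_eq_zero_iff : ∀ x : E, cabs x = 0 ↔ x = 0
  cabs_smul : ∀ (c : ℂ) (x : E), cabs (c • x) = (‖c‖ : ℂ) • cabs x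
  cabs_add_le : ∀ x y : E, cabs (x + y) ≤ cabs x + cabs y
  norm_cabs : ∀ x : E, ‖cabs x‖ = ‖x‖
  norm_mono : ∀ x y : E, cabs x ≤ cabs y → ‖x‖ ≤ ‖y‖
  conj_add : ∀ x y : E, conj (x + y) = conj x + conj y
  conj_smul : ∀ (c : ℂ) (x : E), conj (c • x) = (starRingEnd ℂ c) • conj x
  conj_conj : ∀ x : E, conj (conj x) = x
  conj_of_nonneg : ∀ x : E, 0 ≤ x → conj x = x
  cabs_conj : ∀ x : E, cabs (conj x) = cabs x
  cabs_isLUB : ∀ x : E, conj x = x → IsLUB {x, -x} (cabs x)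
  exists_lub : ∀ x y : E, conj x = x → conj y = y → ∃ z : E, IsLUB {x, y} z

open ComplexBanachLattice

/-- A bounded linear operator on a complex Banach lattice is positive
if it maps positive elements to positive elements. -/
def IsPosOp {E : Type*} [ComplexBanachLattice E] (T : E →L[ℂ] E) : Prop :=
  ∀ x : E, 0 ≤ x → 0 ≤ T x

/-- The set `I` from Lemma 4.4: all `x` admitting a sequence `xₙ → x`
with `Sₙ|xₙ| → 0`. -/
def idealSet {E : Type*} [ComplexBanachLattice E] (S : ℕ → E →L[ℂ] E) : Set E :=
  {x : E | ∃ u : ℕ → E, Tendsto u atTop (𝓝 x) ∧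
    Tendsto (fun n => (S n) (cabs (u n))) atTop (𝓝 0)}

/-!
Closedness is a diagonal argument, packaged through `graphDist`: for `fₙ u = Sₙ|u|`, the number
`graphDist f 0 n x = inf_u (‖u - x‖ + ‖Sₙ|u|‖)` is an ℓ¹ distance from `(x, 0)` to the graph of `fₙ`.
A point `x` lies in `I` iff `graphDist f 0 n x → 0`, and each `graphDist f 0 n` is 1-Lipschitz,
so `I` is closed.

`I` is a linear subspace because the modulus is subadditive and absolutely homogeneous and every
`Sₙ` is monotone. For solidity, the decompositions `2y = (y + ȳ) + i • (i • (ȳ - y))` into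
self-conjugate parts and `z = (z + |z|) - |z|` reduce to the case `0 ≤ y ≤ |x|`. There, if
`xₙ → x` with `Sₙ|xₙ| → 0`, the elements `2 (y ⊓ |xₙ|) = y + |xₙ| - |y - |xₙ||` tend to `2y`
and are dominated by `2|xₙ|`.
-/

namespace Metric

variable {X Y : Type*} [PseudoMetricSpace X] [PseudoMetricSpace Y]

def graphDist (f : ℕ → X → Y) (y : Y) (n : ℕ) (x : X) : ℝ :=
  ⨅ u, dist u x + dist (f n u) y

variable {f : ℕ → X → Y} {y : Y}

lemma graphDist_le (n : ℕ) (x u : X) : graphDist f y n x ≤ dist u x + dist (f n u) y :=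
  ciInf_le ⟨0, by rintro _ ⟨v, rfl⟩; positivity⟩ u

lemma graphDist_nonneg (n : ℕ) (x : X) : 0 ≤ graphDist f y n x :=
  Real.iInf_nonneg fun _ => by positivity

lemma graphDist_le_add_dist (n : ℕ) (x x' : X) :
    graphDist f y n x ≤ graphDist f y n x' + dist x' x := by
  have : Nonempty X := ⟨x⟩
  rw [← sub_le_iff_le_add]
  refine le_ciInf fun u => ?_
  linarith [graphDist_le (f := f) (y := y) n x u, dist_triangle u x' x]

lemma exists_tendsto_iff_tendsto_graphDist {x : X} :
    (∃ u : ℕ → X, Tendsto u atTop (𝓝 x) ∧ Tendsto (fun n => f n (u n)) atTop (𝓝 y)) ↔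
      Tendsto (fun n => graphDist f y n x) atTop (𝓝 0) := by
  have : Nonempty X := ⟨x⟩
  constructor
  · rintro ⟨u, hu, hfu⟩
    refine squeeze_zero (fun n => graphDist_nonneg n x) (fun n => graphDist_le n x (u n)) ?_
    simpa using (tendsto_iff_dist_tendsto_zero.1 hu).add (tendsto_iff_dist_tendsto_zero.1 hfu)
  · intro h
    have hlt : ∀ n : ℕ, ∃ u, dist u x + dist (f n u) y < graphDist f y n x + 1 / (n + 1) :=
      fun n => exists_lt_of_ciInf_lt (lt_add_of_pos_right _ Nat.one_div_pos_of_nat)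
    choose u hu using hlt
    have hbound : Tendsto (fun n : ℕ => graphDist f y n x + 1 / (n + 1)) atTop (𝓝 0) := by
      simpa using h.add tendsto_one_div_add_atTop_nhds_zero_nat
    refine ⟨u, tendsto_iff_dist_tendsto_zero.2 ?_, tendsto_iff_dist_tendsto_zero.2 ?_⟩
    · exact squeeze_zero (fun _ => dist_nonneg)
        (fun n => by linarith [hu n, dist_nonneg (x := f n (u n)) (y := y)]) hbound
    · exact squeeze_zero (fun _ => dist_nonneg)
        (fun n => by linarith [hu n, dist_nonneg (x := u n) (y := x)]) hbound

lemma isClosed_setOf_exists_tendsto (f : ℕ → X → Y) (y : Y) :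
    IsClosed {x | ∃ u : ℕ → X, Tendsto u atTop (𝓝 x) ∧
      Tendsto (fun n => f n (u n)) atTop (𝓝 y)} := by
  refine isClosed_of_closure_subset fun x hx => exists_tendsto_iff_tendsto_graphDist.2 ?_
  refine Metric.tendsto_atTop.2 fun ε hε => ?_
  obtain ⟨x', hx', hxx'⟩ := Metric.mem_closure_iff.1 hx (ε / 2) (half_pos hε)
  obtain ⟨N, hN⟩ :=
    Metric.tendsto_atTop.1 (exists_tendsto_iff_tendsto_graphDist.1 hx') _ (half_pos hε)
  refine ⟨N, fun n hn => ?_⟩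
  have hx'n := hN n hn
  rw [Real.dist_0_eq_abs, abs_of_nonneg (graphDist_nonneg n _)] at hx'n ⊢
  linarith [graphDist_le_add_dist (f := f) (y := y) n x x', dist_comm x x']

end Metric

lemma Submodule.mem_of_add_self_mem {K V : Type*} [DivisionRing K] [NeZero (2 : K)]
    [AddCommGroup V] [Module K V] {p : Submodule K V} {x : V} (h : x + x ∈ p) : x ∈ p :=
  (p.smul_mem_iff (two_ne_zero (α := K))).1 (by rwa [two_smul])

namespace ComplexBanachLattice

variable {E : Type*} [ComplexBanachLattice E]

instance : IsOrderedAddMonoid E where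
  add_le_add_left a b h c := by simpa only [add_comm _ c] using add_le_add_left' a b h c

lemma conj_neg (x : E) : conj (-x) = -conj x := by
  simpa using conj_smul (-1) x

lemma conj_sub (x y : E) : conj (x - y) = conj x - conj y := by
  rw [sub_eq_add_neg, conj_add, conj_neg, sub_eq_add_neg]

lemma cabs_zero : cabs (0 : E) = 0 := cabs_of_nonneg 0 le_rfl

lemma cabs_neg (x : E) : cabs (-x) = cabs x := by
  simpa using cabs_smul (-1) x

lemma cabs_sub_comm (x y : E) : cabs (x - y) = cabs (y - x) := by
  rw [← neg_sub, cabs_neg]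

lemma cabs_sub_le (x y : E) : cabs (x - y) ≤ cabs x + cabs y := by
  simpa only [sub_eq_add_neg, cabs_neg] using cabs_add_le x (-y)

lemma cabs_add_self (x : E) : cabs (x + x) = cabs x + cabs x := by
  rw [← two_smul ℂ x, cabs_smul, ← two_smul ℂ (cabs x)]
  norm_num

lemma le_cabs {z : E} (hz : conj z = z) : z ≤ cabs z :=
  (cabs_isLUB z hz).1 (by simp)

lemma neg_le_cabs {z : E} (hz : conj z = z) : -z ≤ cabs z :=
  (cabs_isLUB z hz).1 (by simp)

lemma cabs_le {z w : E} (hz : conj z = z) (h : z ≤ w) (h' : -z ≤ w) : cabs z ≤ w :=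
  (cabs_isLUB z hz).2 (by rintro _ (rfl | rfl) <;> assumption)

lemma cabs_sub_cabs_le (x y : E) : cabs (cabs x - cabs y) ≤ cabs (x - y) := by
  have hconj : conj (cabs x - cabs y) = cabs x - cabs y := by
    rw [conj_sub, conj_of_nonneg _ (cabs_nonneg x), conj_of_nonneg _ (cabs_nonneg y)]
  refine cabs_le hconj ?_ ?_
  · simpa using cabs_add_le (x - y) y
  · simpa [cabs_sub_comm x y] using cabs_add_le (y - x) x

lemma lipschitzWith_cabs : LipschitzWith 1 (cabs : E → E) :=
  LipschitzWith.of_dist_le_mul fun x y => by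
    simpa [dist_eq_norm, norm_cabs] using
      norm_mono _ _ ((cabs_sub_cabs_le x y).trans (cabs_of_nonneg _ (cabs_nonneg _)).ge)

lemma continuous_cabs : Continuous (cabs : E → E) := lipschitzWith_cabs.continuous

lemma tendsto_zero_of_nonneg_of_le {f g : ℕ → E} (hf : ∀ n, 0 ≤ f n) (hfg : ∀ n, f n ≤ g n)
    (hg : Tendsto g atTop (𝓝 0)) : Tendsto f atTop (𝓝 0) := by
  refine squeeze_zero_norm (fun n => norm_mono _ _ ?_) (tendsto_zero_iff_norm_tendsto_zero.1 hg)
  rw [cabs_of_nonneg _ (hf n), cabs_of_nonneg _ ((hf n).trans (hfg n))]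
  exact hfg n

end ComplexBanachLattice

section

variable {E : Type*} [ComplexBanachLattice E]

lemma IsPosOp.monotone {T : E →L[ℂ] E} (hT : IsPosOp T) : Monotone T := fun a b h => by
  simpa using hT (b - a) (sub_nonneg.2 h)

variable {S : ℕ → E →L[ℂ] E}

lemma mem_idealSet_of_cabs_le (hS : ∀ n, IsPosOp (S n)) {v w : ℕ → E} {y : E}
    (hv : Tendsto v atTop (𝓝 y)) (hvw : ∀ n, cabs (v n) ≤ w n)
    (hw : Tendsto (fun n => S n (w n)) atTop (𝓝 0)) : y ∈ idealSet S :=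
  ⟨v, hv, tendsto_zero_of_nonneg_of_le (fun n => hS n _ (cabs_nonneg _))
    (fun n => (hS n).monotone (hvw n)) hw⟩

def idealSubmodule (S : ℕ → E →L[ℂ] E) (hS : ∀ n, IsPosOp (S n)) : Submodule ℂ E where
  carrier := idealSet S
  zero_mem' := ⟨0, tendsto_const_nhds, by simp [cabs_zero]⟩
  add_mem' := by
    rintro x y ⟨u, hu, hSu⟩ ⟨v, hv, hSv⟩
    refine mem_idealSet_of_cabs_le hS (hu.add hv) (fun n => cabs_add_le (u n) (v n)) ?_
    simpa using hSu.add hSv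
  smul_mem' := by
    rintro c x ⟨u, hu, hSu⟩
    refine mem_idealSet_of_cabs_le hS (hu.const_smul c) (fun n => (cabs_smul c (u n)).le) ?_
    simpa using hSu.const_smul (‖c‖ : ℂ)

lemma mem_idealSet_of_nonneg_of_le_cabs (hS : ∀ n, IsPosOp (S n)) {x y : E}
    (hx : x ∈ idealSet S) (hy : 0 ≤ y) (hyx : y ≤ cabs x) : y ∈ idealSet S := by
  obtain ⟨u, hu, hSu⟩ := hx
  set r : ℕ → E := fun n => y + cabs (u n) - cabs (y - cabs (u n))
  have hr : ∀ n, 0 ≤ r n ∧ r n ≤ cabs (u n) + cabs (u n) := by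
    intro n
    have hb := cabs_nonneg (u n)
    have hconj : conj (y - cabs (u n)) = y - cabs (u n) := by
      rw [conj_sub, conj_of_nonneg _ hy, conj_of_nonneg _ hb]
    refine ⟨sub_nonneg.2 ?_, ?_⟩
    · simpa [cabs_of_nonneg _ hy, cabs_of_nonneg _ hb] using cabs_sub_le y (cabs (u n))
    · have hsplit : r n =
          (y - cabs (u n)) - cabs (y - cabs (u n)) + (cabs (u n) + cabs (u n)) := by
        simp only [r]; abel
      rw [hsplit]
      exact add_le_of_nonpos_left (sub_nonpos.2 (le_cabs hconj))
  have hcabs : Tendsto (fun n => cabs (u n)) atTop (𝓝 (cabs x)) :=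
    (continuous_cabs.tendsto x).comp hu
  have hlim : Tendsto r atTop (𝓝 (y + cabs x - cabs (y - cabs x))) :=
    (tendsto_const_nhds.add hcabs).sub
      ((continuous_cabs.tendsto _).comp (tendsto_const_nhds.sub hcabs))
  rw [cabs_sub_comm, cabs_of_nonneg _ (sub_nonneg.2 hyx),
    show y + cabs x - (cabs x - y) = y + y by abel] at hlim
  refine Submodule.mem_of_add_self_mem (p := idealSubmodule S hS)
    (mem_idealSet_of_cabs_le hS hlim (fun n => (cabs_of_nonneg _ (hr n).1).trans_le (hr n).2) ?_)
  simpa using hSu.add hSu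

lemma mem_idealSet_of_conj_eq (hS : ∀ n, IsPosOp (S n)) {x z : E} (hx : x ∈ idealSet S)
    (hz : conj z = z) (hzx : cabs z ≤ cabs x) : z ∈ idealSet S := by
  have hx2 : x + x ∈ idealSet S := (idealSubmodule S hS).add_mem hx hx
  have hpos : z + cabs z ∈ idealSubmodule S hS := by
    refine mem_idealSet_of_nonneg_of_le_cabs hS hx2 (neg_le_iff_add_nonneg'.1 (neg_le_cabs hz)) ?_
    rw [cabs_add_self]
    exact add_le_add ((le_cabs hz).trans hzx) hzx
  have habs : cabs z ∈ idealSubmodule S hS :=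
    mem_idealSet_of_nonneg_of_le_cabs hS hx (cabs_nonneg z) hzx
  have hdiff := sub_mem hpos habs
  rwa [add_sub_cancel_right] at hdiff

lemma mem_idealSet_of_cabs_le_cabs (hS : ∀ n, IsPosOp (S n)) {x y : E} (hx : x ∈ idealSet S)
    (hyx : cabs y ≤ cabs x) : y ∈ idealSet S := by
  have hx2 : x + x ∈ idealSet S := (idealSubmodule S hS).add_mem hx hx
  have hle : cabs y + cabs y ≤ cabs (x + x) := by
    rw [cabs_add_self]
    exact add_le_add hyx hyx
  have hre : y + conj y ∈ idealSubmodule S hS := by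
    refine mem_idealSet_of_conj_eq hS hx2 (by rw [conj_add, conj_conj, add_comm]) ?_
    exact (cabs_add_le y (conj y)).trans (by rwa [cabs_conj])
  have him : Complex.I • (conj y - y) ∈ idealSubmodule S hS := by
    refine mem_idealSet_of_conj_eq hS hx2 ?_ ?_
    · rw [conj_smul, conj_sub, conj_conj, Complex.conj_I, neg_smul, ← smul_neg, neg_sub]
    · rw [cabs_smul, Complex.norm_I, Complex.ofReal_one, one_smul]
      exact (cabs_sub_le _ _).trans (by rwa [cabs_conj, add_comm])
  have hdecomp : y + conj y + Complex.I • Complex.I • (conj y - y) = y + y := by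
    rw [smul_smul, Complex.I_mul_I, neg_one_smul, neg_sub]
    abel
  refine Submodule.mem_of_add_self_mem (p := idealSubmodule S hS) ?_
  rw [← hdecomp]
  exact add_mem hre (Submodule.smul_mem _ _ him)

end

/-- Lemma 4.4(a): for a (not necessarily norm bounded) sequence `(Sₙ)` of positive
operators on a complex Banach lattice `E`, the set
`I = {x | ∃ xₙ → x with Sₙ|xₙ| → 0}` is a closed ideal in `E`. -/
theorem idealSet_isClosedIdeal
    {E : Type*} [ComplexBanachLattice E] (S : ℕ → E →L[ℂ] E)
    (hSpos : ∀ n, IsPosOp (S n)) :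
    IsClosed (idealSet S) ∧
    (0 : E) ∈ idealSet S ∧
    (∀ x ∈ idealSet S, ∀ y ∈ idealSet S, x + y ∈ idealSet S) ∧
    (∀ (c : ℂ), ∀ x ∈ idealSet S, c • x ∈ idealSet S) ∧
    (∀ x ∈ idealSet S, ∀ y : E, cabs y ≤ cabs x → y ∈ idealSet S) :=
  ⟨Metric.isClosed_setOf_exists_tendsto (fun n u => S n (cabs u)) 0,
    (idealSubmodule S hSpos).zero_mem,
    fun _ hx _ hy => (idealSubmodule S hSpos).add_mem hx hy,
    fun c _ hx => (idealSubmodule S hSpos).smul_mem c hx,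
    fun _ hx _ hyx => mem_idealSet_of_cabs_le_cabs hSpos hx hyx⟩
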